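/- The positive integers are partitioned by the fibbinary numbers together with the sets Φ_k, k ≥ 1: every positive integer belongs to exactly one of fib, Φ_1, Φ_2, Φ_3, ..., where Φ_k = { 2^r · (q + (2k-1) · 2^{L(q)}) : r ≥ 0, q odd fibbinary }. -/

import Mathlib

/-!
Since `Fibbinary (2 ^ r * n) ↔ Fibbinary n`, only odd `n` matter. An odd non-fibbinary `n` has a
least index `i` with bits `i` and `i + 1` both set; cutting `n` just above bit `i` writes it
as `q + x * 2 ^ (i + 1)` with `q = n % 2 ^ (i + 1)` odd fibbinary of size `i + 1` and
`x = n / 2 ^ (i + 1)` odd, i.e. `n ∈ Φ_k` for `2 * k - 1 = x`. Conversely, in every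
`q + x * 2 ^ q.size` with `q` fibbinary and `x` odd the least such index is `q.size - 1`, so the
cut, and with it `k`, is determined by `n`; and such a number is never fibbinary.
-/

/-- A natural number is fibbinary if its binary representation has no two consecutive 1 bits. -/
def Fibbinary (m : ℕ) : Prop := ∀ i : ℕ, ¬(m.testBit i ∧ m.testBit (i + 1))

def Phi (k : ℕ) : Set ℕ :=
  {m : ℕ | ∃ r q : ℕ, Odd q ∧ Fibbinary q ∧
    m = 2 ^ r * (q + (2 * k - 1) * 2 ^ Nat.size q)}

namespace Nat

theorem testBit_zero_iff_odd (n : ℕ) : n.testBit 0 = true ↔ Odd n := by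
  simp [testBit_zero, odd_iff]

theorem testBit_add_mul_two_pow {q L : ℕ} (x : ℕ) (hq : q < 2 ^ L) (j : ℕ) :
    (q + x * 2 ^ L).testBit j = if j < L then q.testBit j else x.testBit (j - L) := by
  rw [add_comm, mul_comm]
  exact testBit_two_pow_mul_add x hq j

theorem testBit_size_sub_one {n : ℕ} (hn : 0 < n) : n.testBit (n.size - 1) = true := by
  obtain ⟨L, hL⟩ : ∃ L, n.size = L + 1 := ⟨n.size - 1, by have := size_pos.mpr hn; omega⟩
  have hlo : 2 ^ L ≤ n := lt_size.mp (by omega)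
  have hhi : n < 2 ^ (L + 1) := hL ▸ lt_size_self n
  have hdiv : n / 2 ^ L = 1 := Nat.div_eq_of_lt_le (by simpa using hlo) (by omega)
  simpa [hL, hdiv] using testBit_div_two_pow (n := L) n 0

theorem size_eq_of_testBit_of_lt {n i : ℕ} (hi : n.testBit i = true) (hn : n < 2 ^ (i + 1)) :
    n.size = i + 1 :=
  le_antisymm (size_le.mpr hn) (lt_size.mpr (ge_two_pow_of_testBit hi))

theorem two_pow_mul_odd_inj {r s a b : ℕ} (ha : Odd a) (hb : Odd b)
    (h : 2 ^ r * a = 2 ^ s * b) : r = s ∧ a = b := by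
  have hval : ∀ {t c : ℕ}, Odd c → padicValNat 2 (2 ^ t * c) = t := fun hc => by
    rw [padicValNat.mul (by positivity) hc.pos.ne', padicValNat.prime_pow,
      padicValNat.eq_zero_of_not_dvd hc.not_two_dvd_nat, add_zero]
  obtain rfl : r = s := by rw [← hval (t := r) ha, h, hval hb]
  exact ⟨rfl, Nat.eq_of_mul_eq_mul_left (by positivity) h⟩

end Nat

open Nat

theorem fibbinary_two_pow_mul_iff {r n : ℕ} : Fibbinary (2 ^ r * n) ↔ Fibbinary n := by
  simp only [Fibbinary, testBit_two_pow_mul, Bool.and_eq_true, decide_eq_true_eq]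
  refine ⟨fun h i hi => h (i + r) ?_, fun h j hj => h (j - r) ?_⟩
  · exact ⟨⟨by omega, by simpa using hi.1⟩, by omega,
      by simpa [show i + r + 1 - r = i + 1 by omega] using hi.2⟩
  · exact ⟨hj.1.2, by simpa [show j + 1 - r = j - r + 1 by omega] using hj.2.2⟩

def consecutiveOnes (n : ℕ) : Set ℕ := {i | n.testBit i ∧ n.testBit (i + 1)}

theorem fibbinary_iff_consecutiveOnes_eq_empty {n : ℕ} :
    Fibbinary n ↔ consecutiveOnes n = ∅ :=
  Set.eq_empty_iff_forall_notMem.symm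

theorem isLeast_consecutiveOnes {q x : ℕ} (hq : Fibbinary q) (hq0 : 0 < q) (hx : Odd x) :
    IsLeast (consecutiveOnes (q + x * 2 ^ q.size)) (q.size - 1) := by
  have hsize : 0 < q.size := size_pos.mpr hq0
  have hbit := testBit_add_mul_two_pow x (lt_size_self q)
  refine ⟨⟨?_, ?_⟩, fun i ⟨hi, hi1⟩ => ?_⟩
  · simpa [hbit, hsize] using testBit_size_sub_one hq0
  · simpa [hbit, Nat.sub_add_cancel hsize] using (testBit_zero_iff_odd x).mpr hx
  · by_contra hlt
    rw [hbit, if_pos (by omega)] at hi hi1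
    exact hq i ⟨hi, hi1⟩

theorem add_mul_two_pow_size_inj {q q' x x' : ℕ} (hq : Fibbinary q) (hq0 : 0 < q) (hx : Odd x)
    (hq' : Fibbinary q') (hq0' : 0 < q') (hx' : Odd x')
    (h : q + x * 2 ^ q.size = q' + x' * 2 ^ q'.size) : q = q' ∧ x = x' := by
  have hL : q.size = q'.size := by
    have := (isLeast_consecutiveOnes hq hq0 hx).unique (h ▸ isLeast_consecutiveOnes hq' hq0' hx')
    have := size_pos.mpr hq0
    have := size_pos.mpr hq0'
    omega
  have hlt : q < 2 ^ q'.size := hL ▸ lt_size_self q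
  rw [hL] at h
  have hmod := congrArg (· % 2 ^ q'.size) h
  have hdiv := congrArg (· / 2 ^ q'.size) h
  simp only [add_mul_mod_self_right, add_mul_div_right _ _ (Nat.two_pow_pos _),
    mod_eq_of_lt hlt, mod_eq_of_lt (lt_size_self q'), div_eq_of_lt hlt,
    div_eq_of_lt (lt_size_self q'), zero_add] at hmod hdiv
  exact ⟨hmod, hdiv⟩

theorem odd_add_mul_two_pow_size {q : ℕ} (hq : Odd q) (x : ℕ) : Odd (q + x * 2 ^ q.size) := by
  have : 0 < q.size := size_pos.mpr hq.pos
  exact hq.add_even ((even_two.pow_of_ne_zero this.ne').mul_left x)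

theorem exists_eq_add_mul_two_pow_size {n : ℕ} (hn : Odd n) (hnf : ¬ Fibbinary n) :
    ∃ q x, Odd q ∧ Fibbinary q ∧ Odd x ∧ n = q + x * 2 ^ q.size := by
  classical
  have hex : (consecutiveOnes n).Nonempty :=
    Set.nonempty_iff_ne_empty.mpr (mt fibbinary_iff_consecutiveOnes_eq_empty.mpr hnf)
  set i := Nat.find hex
  obtain ⟨hi, hi1⟩ := Nat.find_spec hex
  have hbit : ∀ j, (n % 2 ^ (i + 1)).testBit j = (decide (j < i + 1) && n.testBit j) :=
    fun j => testBit_mod_two_pow n (i + 1) j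
  have hsize : (n % 2 ^ (i + 1)).size = i + 1 :=
    size_eq_of_testBit_of_lt (by simpa [hbit] using hi) (mod_lt _ (Nat.two_pow_pos _))
  refine ⟨n % 2 ^ (i + 1), n / 2 ^ (i + 1), ?_, fun j hj => ?_, ?_, ?_⟩
  · exact (testBit_zero_iff_odd _).mp (by simpa [hbit] using (testBit_zero_iff_odd n).mpr hn)
  · simp only [hbit, Bool.and_eq_true, decide_eq_true_eq] at hj
    exact Nat.find_min hex (show j < i by omega) ⟨hj.1.2, hj.2.2⟩
  · exact (testBit_zero_iff_odd _).mp (by rwa [testBit_div_two_pow, zero_add])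
  · rw [hsize, mod_add_div']

theorem odd_two_mul_sub_one {k : ℕ} (hk : 1 ≤ k) : Odd (2 * k - 1) := ⟨k - 1, by omega⟩

theorem not_fibbinary_of_mem_Phi {m k : ℕ} (hk : 1 ≤ k) (h : m ∈ Phi k) : ¬ Fibbinary m := by
  obtain ⟨r, q, hq, hqf, rfl⟩ := h
  rw [fibbinary_two_pow_mul_iff, fibbinary_iff_consecutiveOnes_eq_empty]
  exact (isLeast_consecutiveOnes hqf hq.pos (odd_two_mul_sub_one hk)).nonempty.ne_empty

theorem exists_mem_Phi_of_not_fibbinary {m : ℕ} (hm : ¬ Fibbinary m) :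
    ∃ k, 1 ≤ k ∧ m ∈ Phi k := by
  have hm0 : m ≠ 0 := by
    rintro rfl
    exact hm fun i => by simp
  obtain ⟨r, n, hn, rfl⟩ := exists_eq_two_pow_mul_odd hm0
  obtain ⟨q, x, hq, hqf, ⟨t, rfl⟩, rfl⟩ :=
    exists_eq_add_mul_two_pow_size hn (mt fibbinary_two_pow_mul_iff.mpr hm)
  exact ⟨t + 1, by omega, r, q, hq, hqf, by rw [show 2 * (t + 1) - 1 = 2 * t + 1 by omega]⟩

theorem eq_of_mem_Phi_of_mem_Phi {m k k' : ℕ} (hk : 1 ≤ k) (hk' : 1 ≤ k')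
    (h : m ∈ Phi k) (h' : m ∈ Phi k') : k = k' := by
  obtain ⟨r, q, hq, hqf, rfl⟩ := h
  obtain ⟨r', q', hq', hqf', heq⟩ := h'
  have hx := odd_two_mul_sub_one hk
  have hx' := odd_two_mul_sub_one hk'
  obtain ⟨-, hcore⟩ := two_pow_mul_odd_inj (odd_add_mul_two_pow_size hq _)
    (odd_add_mul_two_pow_size hq' _) heq
  have := (add_mul_two_pow_size_inj hqf hq.pos hx hqf' hq'.pos hx' hcore).2
  omega

theorem positive_integers_partition_general (m : ℕ) :
    (Fibbinary m ∧ ∀ k : ℕ, 1 ≤ k → m ∉ Phi k) ∨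
    (¬ Fibbinary m ∧ ∃! k : ℕ, 1 ≤ k ∧ m ∈ Phi k) := by
  by_cases hf : Fibbinary m
  · exact Or.inl ⟨hf, fun k hk hmem => not_fibbinary_of_mem_Phi hk hmem hf⟩
  · obtain ⟨k, hk, hmem⟩ := exists_mem_Phi_of_not_fibbinary hf
    exact Or.inr ⟨hf, k, ⟨hk, hmem⟩, fun k' ⟨hk', hmem'⟩ =>
      eq_of_mem_Phi_of_mem_Phi hk' hk hmem' hmem⟩

theorem positive_integers_partition (m : ℕ) (hm : 0 < m) :
    (Fibbinary m ∧ ∀ k : ℕ, 1 ≤ k → m ∉ Phi k) ∨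
    (¬ Fibbinary m ∧ ∃! k : ℕ, 1 ≤ k ∧ m ∈ Phi k) :=
  positive_integers_partition_general m
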